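/- For any real numbers α, β with α + β > 2, α < 2, and β < 2, there exists a constant C such that for all n ∈ ℤ², the sum over all pairs (n₁, n₂) ∈ ℤ² × ℤ² with n₁ + n₂ = n of ⟨n₁⟩^(-α) ⟨n₂⟩^(-β) is at most C ⟨n⟩^(2 - α - β), where ⟨m⟩ = √(1 + |m|²). -/

import Mathlib

/-- Japanese bracket on the lattice ℤ²: ⟨n⟩ = √(1 + |n|²). -/
noncomputable def jap (n : ℤ × ℤ) : ℝ := Real.sqrt (1 + ((n.1 : ℝ)^2 + (n.2 : ℝ)^2))

/-!
Split the sum according to which of `⟨m⟩`, `⟨n - m⟩` is smaller; by symmetry take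
`⟨m⟩ ≤ ⟨n - m⟩`, so that `⟨n - m⟩ ≥ ⟨n⟩ / 2`. Where moreover `⟨m⟩ ≤ ⟨n⟩` the summand is at most
`2^β ⟨n⟩^(-β) ⟨m⟩^(-α)`, and since `α < 2` the sum of `⟨m⟩^(-α)` over the ball `⟨m⟩ ≤ r` is
`O(r^(2-α))`. Where `⟨m⟩ ≥ ⟨n⟩` the summand is at most `⟨m⟩^(-(α+β))`, and since `α + β > 2` its sum
over `⟨m⟩ ≥ s` is `O(s^(2-α-β))`.

Both lattice sums reduce to one-dimensional ones in the weight `max 1 |a|`, which are compared with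
integrals of `x^(-t)`: the ball through `⟨m⟩^(-t) ≤ max 1 |m₁| ^ (-t/2) * max 1 |m₂| ^ (-t/2)`,
the tail by summing first over the smaller coordinate, of which there are `O(max 1 |a|)` choices.
Sums are taken in `ℝ≥0∞` so that no summability has to be carried along.
-/

open Finset Real
open scoped NNReal

theorem sum_range_add_one_rpow_neg_le {u : ℝ} (hu0 : 0 ≤ u) (hu1 : u < 1) (N : ℕ) :
    ∑ n ∈ range N, ((n : ℝ) + 1) ^ (-u) ≤ (N : ℝ) ^ (1 - u) / (1 - u) := by
  have hu : 0 < 1 - u := by linarith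
  cases N with
  | zero => simp [zero_rpow hu.ne']
  | succ N =>
    have anti : AntitoneOn (fun x : ℝ => x ^ (-u)) (Set.Icc 1 (1 + N)) :=
      (antitoneOn_rpow_Ioi_of_exponent_nonpos (by linarith)).mono
        fun x hx => one_pos.trans_le hx.1
    have hint := anti.sum_le_integral
    rw [integral_rpow (Or.inl (by linarith)), one_rpow, neg_add_eq_sub] at hint
    have hfirst : (1 : ℝ) ≤ 1 / (1 - u) := by rw [le_div_iff₀ hu]; linarith
    rw [sum_range_succ', Nat.cast_succ]
    simp only [Nat.cast_zero, add_comm _ (1 : ℝ), add_zero, one_rpow] at hint ⊢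
    rw [sub_div] at hint
    linarith

theorem sum_Ico_rpow_neg_le {t : ℝ} (ht : 1 < t) {N : ℕ} (hN : 1 ≤ N) (M : ℕ) :
    ∑ n ∈ Ico N M, (n : ℝ) ^ (-t) ≤ 2 ^ t / (t - 1) * (N : ℝ) ^ (1 - t) := by
  have hN0 : (0 : ℝ) < N := by exact_mod_cast hN
  have anti : AntitoneOn (fun x : ℝ => x ^ (-t)) (Set.Icc N M) :=
    (antitoneOn_rpow_Ioi_of_exponent_nonpos (by linarith)).mono
      fun x hx => lt_of_lt_of_le hN0 hx.1
  have hint := anti.sum_Ico_le_integral (integrableOn_Ioi_rpow_of_lt (by linarith) hN0)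
    (fun x hx => rpow_nonneg (hN0.trans hx).le _)
  rw [integral_Ioi_rpow_of_lt (by linarith) hN0] at hint
  have hdouble : ∀ n ∈ Ico N M, (n : ℝ) ^ (-t) ≤ 2 ^ t * ((n + 1 : ℕ) : ℝ) ^ (-t) := by
    intro n hn
    have hn1 : (1 : ℝ) ≤ n := by exact_mod_cast hN.trans (mem_Ico.1 hn).1
    calc (n : ℝ) ^ (-t) ≤ (((n + 1 : ℕ) : ℝ) / 2) ^ (-t) :=
          rpow_le_rpow_of_nonpos (by positivity) (by push_cast; linarith) (by linarith)
      _ = 2 ^ t * ((n + 1 : ℕ) : ℝ) ^ (-t) := by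
          rw [div_rpow (by positivity) zero_le_two, rpow_neg zero_le_two, div_inv_eq_mul, mul_comm]
  calc ∑ n ∈ Ico N M, (n : ℝ) ^ (-t) ≤ ∑ n ∈ Ico N M, 2 ^ t * ((n + 1 : ℕ) : ℝ) ^ (-t) :=
        sum_le_sum hdouble
    _ ≤ 2 ^ t * (-(N : ℝ) ^ (-t + 1) / (-t + 1)) := by rw [← mul_sum]; gcongr
    _ = 2 ^ t / (t - 1) * (N : ℝ) ^ (1 - t) := by
        rw [neg_add_eq_sub, ← neg_sub t 1, div_neg, neg_div, neg_neg]; ring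

theorem ENNReal.tsum_ofReal_le_of_sum_range_le {f : ℕ → ℝ} {c : ℝ} (hf : ∀ n, 0 ≤ f n)
    (h : ∀ M, ∑ n ∈ range M, f n ≤ c) : ∑' n, ENNReal.ofReal (f n) ≤ ENNReal.ofReal c :=
  ENNReal.tsum_le_of_sum_range_le fun M => by
    rw [← ENNReal.ofReal_sum_of_nonneg fun n _ => hf n]
    exact ENNReal.ofReal_le_ofReal (h M)

theorem tsum_nat_ball_rpow_neg_le {u r : ℝ} (hu0 : 0 ≤ u) (hu1 : u < 1) (hr : 0 ≤ r) :
    ∑' n : ℕ, ENNReal.ofReal (if (n : ℝ) + 1 ≤ r then ((n : ℝ) + 1) ^ (-u) else 0) ≤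
      ENNReal.ofReal (r ^ (1 - u) / (1 - u)) := by
  refine ENNReal.tsum_ofReal_le_of_sum_range_le (fun n => by split_ifs <;> positivity) fun M => ?_
  have hsub : (range M).filter (fun n : ℕ => (n : ℝ) + 1 ≤ r) ⊆ range ⌊r⌋₊ := fun n hn =>
    mem_range.2 (Nat.le_floor (by push_cast; exact (mem_filter.1 hn).2))
  rw [← sum_filter]
  calc _ ≤ ∑ n ∈ range ⌊r⌋₊, ((n : ℝ) + 1) ^ (-u) :=
        sum_le_sum_of_subset_of_nonneg hsub fun n _ _ => by positivity
    _ ≤ (⌊r⌋₊ : ℝ) ^ (1 - u) / (1 - u) := sum_range_add_one_rpow_neg_le hu0 hu1 _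
    _ ≤ r ^ (1 - u) / (1 - u) := by
        have : 0 < 1 - u := by linarith
        gcongr
        exact Nat.floor_le hr

theorem tsum_nat_tail_rpow_neg_le {t s : ℝ} (ht : 1 < t) (hs : 0 < s) :
    ∑' n : ℕ, ENNReal.ofReal (if s ≤ n then (n : ℝ) ^ (-t) else 0) ≤
      ENNReal.ofReal (2 ^ t / (t - 1) * s ^ (1 - t)) := by
  refine ENNReal.tsum_ofReal_le_of_sum_range_le (fun n => by split_ifs <;> positivity) fun M => ?_
  have hsub : (range M).filter (fun n : ℕ => s ≤ n) ⊆ Ico ⌈s⌉₊ M := fun n hn => by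
    obtain ⟨hnM, hsn⟩ := mem_filter.1 hn
    exact mem_Ico.2 ⟨Nat.ceil_le.2 hsn, mem_range.1 hnM⟩
  rw [← sum_filter]
  calc _ ≤ ∑ n ∈ Ico ⌈s⌉₊ M, (n : ℝ) ^ (-t) :=
        sum_le_sum_of_subset_of_nonneg hsub fun n _ _ => by positivity
    _ ≤ 2 ^ t / (t - 1) * (⌈s⌉₊ : ℝ) ^ (1 - t) :=
        sum_Ico_rpow_neg_le ht (Nat.one_le_ceil_iff.2 hs) M
    _ ≤ 2 ^ t / (t - 1) * s ^ (1 - t) := by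
        have : 0 < t - 1 := by linarith
        exact mul_le_mul_of_nonneg_left
          (rpow_le_rpow_of_nonpos hs (Nat.le_ceil s) (by linarith)) (by positivity)

noncomputable def maxOneAbs (a : ℤ) : ℝ := max 1 |(a : ℝ)|

theorem maxOneAbs_pos (a : ℤ) : 0 < maxOneAbs a := one_pos.trans_le (le_max_left _ _)

theorem tsum_int_maxOneAbs_le (F : ℝ → ENNReal) :
    ∑' a : ℤ, F (maxOneAbs a) ≤ 3 * ∑' n : ℕ, F ((n : ℝ) + 1) := by
  have hzero : maxOneAbs ((0 : ℕ) : ℤ) = 1 := by simp [maxOneAbs]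
  have hsucc : ∀ n : ℕ, maxOneAbs ((n + 1 : ℕ) : ℤ) = n + 1 := fun n => by
    rw [maxOneAbs, max_eq_right] <;> push_cast <;> rw [abs_of_pos (by positivity)]
    linarith [n.cast_nonneg (α := ℝ)]
  have hneg : ∀ n : ℕ, maxOneAbs (-((n : ℤ) + 1)) = n + 1 := fun n => by
    rw [maxOneAbs, max_eq_right] <;> push_cast <;> rw [abs_neg, abs_of_pos (by positivity)]
    linarith [n.cast_nonneg (α := ℝ)]
  have hfirst : F 1 ≤ ∑' n : ℕ, F ((n : ℝ) + 1) := by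
    simpa using ENNReal.le_tsum (f := fun n : ℕ => F ((n : ℝ) + 1)) 0
  rw [tsum_of_nat_of_neg_add_one ENNReal.summable ENNReal.summable,
    tsum_eq_zero_add' ENNReal.summable, hzero]
  simp only [hsucc, hneg]
  calc F 1 + ∑' n : ℕ, F ((n : ℝ) + 1) + ∑' n : ℕ, F ((n : ℝ) + 1)
      ≤ ∑' n : ℕ, F ((n : ℝ) + 1) + ∑' n : ℕ, F ((n : ℝ) + 1) + ∑' n : ℕ, F ((n : ℝ) + 1) := by
        gcongr
    _ = 3 * ∑' n : ℕ, F ((n : ℝ) + 1) := by ring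

theorem tsum_int_ball_rpow_neg_le {u r : ℝ} (hu0 : 0 ≤ u) (hu1 : u < 1) (hr : 0 ≤ r) :
    ∑' a : ℤ, ENNReal.ofReal (if maxOneAbs a ≤ r then maxOneAbs a ^ (-u) else 0) ≤
      ENNReal.ofReal (3 / (1 - u) * r ^ (1 - u)) := by
  calc _ ≤ 3 * ENNReal.ofReal (r ^ (1 - u) / (1 - u)) :=
        (tsum_int_maxOneAbs_le fun x => ENNReal.ofReal (if x ≤ r then x ^ (-u) else 0)).trans
          (mul_le_mul_right (tsum_nat_ball_rpow_neg_le hu0 hu1 hr) 3)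
    _ = ENNReal.ofReal (3 / (1 - u) * r ^ (1 - u)) := by
        rw [← ENNReal.ofReal_ofNat 3, ← ENNReal.ofReal_mul zero_le_three]
        ring_nf

theorem tsum_int_tail_rpow_neg_le {t s : ℝ} (ht : 1 < t) (hs : 0 < s) :
    ∑' a : ℤ, ENNReal.ofReal (if s ≤ maxOneAbs a then maxOneAbs a ^ (-t) else 0) ≤
      ENNReal.ofReal (3 * 2 ^ t / (t - 1) * s ^ (1 - t)) := by
  set G : ℝ → ENNReal := fun x => ENNReal.ofReal (if s ≤ x then x ^ (-t) else 0)
  have hshift : ∑' n : ℕ, G ((n : ℝ) + 1) ≤ ∑' n : ℕ, G n := by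
    simpa using ENNReal.tsum_comp_le_tsum_of_injective (add_left_injective 1) (fun n : ℕ => G n)
  calc _ ≤ 3 * ENNReal.ofReal (2 ^ t / (t - 1) * s ^ (1 - t)) :=
        (tsum_int_maxOneAbs_le G).trans
          (mul_le_mul_right (hshift.trans (tsum_nat_tail_rpow_neg_le ht hs)) 3)
    _ = ENNReal.ofReal (3 * 2 ^ t / (t - 1) * s ^ (1 - t)) := by
        rw [← ENNReal.ofReal_ofNat 3, ← ENNReal.ofReal_mul zero_le_three]
        ring_nf

theorem jap_sq (m : ℤ × ℤ) : jap m ^ 2 = 1 + ((m.1 : ℝ) ^ 2 + (m.2 : ℝ) ^ 2) :=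
  Real.sq_sqrt (by positivity)

theorem one_le_jap (m : ℤ × ℤ) : 1 ≤ jap m :=
  Real.one_le_sqrt.2 (le_add_of_nonneg_right (by positivity))

theorem jap_pos (m : ℤ × ℤ) : 0 < jap m := one_pos.trans_le (one_le_jap m)

theorem maxOneAbs_fst_le_jap (m : ℤ × ℤ) : maxOneAbs m.1 ≤ jap m :=
  max_le (one_le_jap m) ((Real.le_sqrt (abs_nonneg _) (by positivity)).2
    (by rw [sq_abs]; nlinarith [sq_nonneg (m.2 : ℝ)]))

theorem maxOneAbs_snd_le_jap (m : ℤ × ℤ) : maxOneAbs m.2 ≤ jap m :=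
  max_le (one_le_jap m) ((Real.le_sqrt (abs_nonneg _) (by positivity)).2
    (by rw [sq_abs]; nlinarith [sq_nonneg (m.1 : ℝ)]))

theorem jap_le_two_mul_max (m : ℤ × ℤ) : jap m ≤ 2 * max (maxOneAbs m.1) (maxOneAbs m.2) := by
  set M := max (maxOneAbs m.1) (maxOneAbs m.2)
  have h1 : 1 ≤ M := (le_max_left _ _).trans (le_max_left _ _)
  have h2 : (m.1 : ℝ) ^ 2 ≤ M ^ 2 := by
    rw [← sq_abs]; gcongr; exact (le_max_right _ _).trans (le_max_left _ _)
  have h3 : (m.2 : ℝ) ^ 2 ≤ M ^ 2 := by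
    rw [← sq_abs]; gcongr; exact (le_max_right _ _).trans (le_max_right _ _)
  exact Real.sqrt_le_iff.2 ⟨by positivity, by nlinarith⟩

theorem jap_add_le_two_mul {x y : ℤ × ℤ} (h : jap x ≤ jap y) : jap (x + y) ≤ 2 * jap y := by
  have hxy : jap x ^ 2 ≤ jap y ^ 2 := by gcongr; exact (jap_pos x).le
  rw [jap_sq, jap_sq] at hxy
  refine Real.sqrt_le_iff.2 ⟨by linarith [jap_pos y], ?_⟩
  rw [mul_pow, jap_sq, Prod.fst_add, Prod.snd_add]
  push_cast
  nlinarith [sq_nonneg ((x.1 : ℝ) - y.1), sq_nonneg ((x.2 : ℝ) - y.2)]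

theorem tsum_prod_max_maxOneAbs_le (G : ℝ → ENNReal) :
    ∑' m : ℤ × ℤ, G (max (maxOneAbs m.1) (maxOneAbs m.2)) ≤
      2 * ∑' a : ℤ, ENNReal.ofReal (3 * maxOneAbs a) * G (maxOneAbs a) := by
  have hcount (a : ℤ) : ∑' b : ℤ, (if maxOneAbs b ≤ maxOneAbs a then 1 else 0 : ENNReal) ≤
      ENNReal.ofReal (3 * maxOneAbs a) := by
    have h := tsum_int_ball_rpow_neg_le le_rfl one_pos (zero_le_one.trans (le_max_left 1 _))
      (r := maxOneAbs a)
    simp only [neg_zero, rpow_zero, sub_zero, rpow_one, div_one] at h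
    convert h using 3
    split_ifs <;> simp
  have hsplit (m : ℤ × ℤ) : G (max (maxOneAbs m.1) (maxOneAbs m.2)) ≤
      (if maxOneAbs m.2 ≤ maxOneAbs m.1 then G (maxOneAbs m.1) else 0) +
        (if maxOneAbs m.1 ≤ maxOneAbs m.2 then G (maxOneAbs m.2) else 0) := by
    rcases le_total (maxOneAbs m.2) (maxOneAbs m.1) with h | h <;> simp [h]
  have hswap : ∑' m : ℤ × ℤ, (if maxOneAbs m.1 ≤ maxOneAbs m.2 then G (maxOneAbs m.2) else 0) =
      ∑' m : ℤ × ℤ, (if maxOneAbs m.2 ≤ maxOneAbs m.1 then G (maxOneAbs m.1) else 0) :=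
    (Equiv.prodComm ℤ ℤ).tsum_eq
      (fun m : ℤ × ℤ => if maxOneAbs m.2 ≤ maxOneAbs m.1 then G (maxOneAbs m.1) else 0)
  have hhalf : ∑' m : ℤ × ℤ, (if maxOneAbs m.2 ≤ maxOneAbs m.1 then G (maxOneAbs m.1) else 0) ≤
      ∑' a : ℤ, ENNReal.ofReal (3 * maxOneAbs a) * G (maxOneAbs a) := by
    rw [ENNReal.tsum_prod']
    refine ENNReal.tsum_le_tsum fun a => ?_
    calc ∑' b : ℤ, (if maxOneAbs b ≤ maxOneAbs a then G (maxOneAbs a) else 0)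
        = (∑' b : ℤ, (if maxOneAbs b ≤ maxOneAbs a then 1 else 0 : ENNReal)) * G (maxOneAbs a) := by
          rw [← ENNReal.tsum_mul_right]
          congr 1 with b
          split_ifs <;> simp
      _ ≤ _ := by gcongr; exact hcount a
  calc _ ≤ ∑' m : ℤ × ℤ, ((if maxOneAbs m.2 ≤ maxOneAbs m.1 then G (maxOneAbs m.1) else 0) +
        (if maxOneAbs m.1 ≤ maxOneAbs m.2 then G (maxOneAbs m.2) else 0)) :=
        ENNReal.tsum_le_tsum hsplit
    _ ≤ _ := by rw [ENNReal.tsum_add, hswap, two_mul]; gcongr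

theorem exists_tsum_ball_jap_rpow_neg_le {t : ℝ} (ht0 : 0 ≤ t) (ht2 : t < 2) :
    ∃ C : ℝ≥0, ∀ r, 0 ≤ r → ∑' m : ℤ × ℤ, ENNReal.ofReal (if jap m ≤ r then jap m ^ (-t) else 0) ≤
      C * ENNReal.ofReal (r ^ (2 - t)) := by
  set c := 3 / (1 - t / 2)
  refine ⟨Real.toNNReal (c ^ 2), fun r hr => ?_⟩
  set f : ℤ → ENNReal := fun a =>
    ENNReal.ofReal (if maxOneAbs a ≤ r then maxOneAbs a ^ (-(t / 2)) else 0)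
  have hpt (m : ℤ × ℤ) :
      ENNReal.ofReal (if jap m ≤ r then jap m ^ (-t) else 0) ≤ f m.1 * f m.2 := by
    have := maxOneAbs_pos m.1
    have := maxOneAbs_pos m.2
    have := jap_pos m
    rw [← ENNReal.ofReal_mul (by split_ifs <;> positivity)]
    refine ENNReal.ofReal_le_ofReal ?_
    by_cases h : jap m ≤ r
    · rw [if_pos h, if_pos ((maxOneAbs_fst_le_jap m).trans h),
        if_pos ((maxOneAbs_snd_le_jap m).trans h)]
      calc jap m ^ (-t) = jap m ^ (-(t / 2)) * jap m ^ (-(t / 2)) := by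
            rw [← rpow_add (jap_pos m)]; ring_nf
        _ ≤ _ := mul_le_mul
            (rpow_le_rpow_of_nonpos (maxOneAbs_pos _) (maxOneAbs_fst_le_jap m) (by linarith))
            (rpow_le_rpow_of_nonpos (maxOneAbs_pos _) (maxOneAbs_snd_le_jap m) (by linarith))
            (by positivity) (by positivity)
    · rw [if_neg h]; split_ifs <;> positivity
  calc _ ≤ ∑' m : ℤ × ℤ, f m.1 * f m.2 := ENNReal.tsum_le_tsum hpt
    _ = (∑' a, f a) * ∑' b, f b := by
        rw [ENNReal.tsum_prod', ← ENNReal.tsum_mul_right]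
        simp_rw [ENNReal.tsum_mul_left]
    _ ≤ ENNReal.ofReal (c * r ^ (1 - t / 2)) * ENNReal.ofReal (c * r ^ (1 - t / 2)) := by
        gcongr <;> exact tsum_int_ball_rpow_neg_le (by linarith) (by linarith) hr
    _ = Real.toNNReal (c ^ 2) * ENNReal.ofReal (r ^ (2 - t)) := by
        have hc : 0 ≤ c := div_nonneg zero_le_three (by linarith)
        have : 0 ≤ r ^ (1 - t / 2) := rpow_nonneg hr _
        change _ = ENNReal.ofReal _ * _
        rw [← ENNReal.ofReal_mul (by positivity), ← ENNReal.ofReal_mul (sq_nonneg c),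
          show 2 - t = (1 - t / 2) + (1 - t / 2) by ring, rpow_add' hr (by linarith)]
        ring_nf

theorem exists_tsum_tail_jap_rpow_neg_le {t : ℝ} (ht : 2 < t) :
    ∃ C : ℝ≥0, ∀ s, 0 < s → ∑' m : ℤ × ℤ, ENNReal.ofReal (if s ≤ jap m then jap m ^ (-t) else 0) ≤
      C * ENNReal.ofReal (s ^ (2 - t)) := by
  refine ⟨Real.toNNReal (18 * 2 ^ (t - 1) / (t - 2) / 2 ^ (2 - t)), fun s hs => ?_⟩
  set G : ℝ → ENNReal := fun x => ENNReal.ofReal (if s / 2 ≤ x then x ^ (-t) else 0)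
  have hpt (m : ℤ × ℤ) : ENNReal.ofReal (if s ≤ jap m then jap m ^ (-t) else 0) ≤
      G (max (maxOneAbs m.1) (maxOneAbs m.2)) := by
    have := maxOneAbs_pos m.1
    refine ENNReal.ofReal_le_ofReal ?_
    by_cases h : s ≤ jap m
    · rw [if_pos h, if_pos (by linarith [jap_le_two_mul_max m])]
      exact rpow_le_rpow_of_nonpos ((maxOneAbs_pos _).trans_le (le_max_left _ _))
        (max_le (maxOneAbs_fst_le_jap m) (maxOneAbs_snd_le_jap m)) (by linarith)
    · rw [if_neg h]; split_ifs <;> positivity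
  have hweight (a : ℤ) : ENNReal.ofReal (3 * maxOneAbs a) * G (maxOneAbs a) =
      3 * ENNReal.ofReal (if s / 2 ≤ maxOneAbs a then maxOneAbs a ^ (-(t - 1)) else 0) := by
    have ha := maxOneAbs_pos a
    rw [← ENNReal.ofReal_mul (by positivity), ← ENNReal.ofReal_ofNat 3,
      ← ENNReal.ofReal_mul zero_le_three]
    congr 1
    split_ifs
    · rw [show -(t - 1) = -t + 1 by ring, rpow_add_one ha.ne']; ring
    · simp
  calc _ ≤ ∑' m : ℤ × ℤ, G (max (maxOneAbs m.1) (maxOneAbs m.2)) := ENNReal.tsum_le_tsum hpt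
    _ ≤ 2 * ∑' a : ℤ, ENNReal.ofReal (3 * maxOneAbs a) * G (maxOneAbs a) :=
        tsum_prod_max_maxOneAbs_le G
    _ = 6 * ∑' a : ℤ,
          ENNReal.ofReal (if s / 2 ≤ maxOneAbs a then maxOneAbs a ^ (-(t - 1)) else 0) := by
        simp_rw [hweight, ENNReal.tsum_mul_left, ← mul_assoc]; norm_num
    _ ≤ 6 * ENNReal.ofReal (3 * 2 ^ (t - 1) / (t - 1 - 1) * (s / 2) ^ (1 - (t - 1))) := by
        gcongr; exact tsum_int_tail_rpow_neg_le (by linarith) (by positivity)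
    _ = _ := by
        change _ = ENNReal.ofReal _ * _
        rw [show t - 1 - 1 = t - 2 by ring, show 1 - (t - 1) = 2 - t by ring,
          div_rpow hs.le zero_le_two, ← ENNReal.ofReal_ofNat 6,
          ← ENNReal.ofReal_mul (by norm_num), ← ENNReal.ofReal_mul]
        · ring_nf
        · have : 0 < t - 2 := by linarith
          positivity

theorem half_convolution_summand_le {α β : ℝ} (hβ : 0 ≤ β) (n m : ℤ × ℤ) :
    (if jap m ≤ jap (n - m) then jap m ^ (-α) * jap (n - m) ^ (-β) else 0) ≤
      2 ^ β * jap n ^ (-β) * (if jap m ≤ jap n then jap m ^ (-α) else 0) +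
        (if jap n ≤ jap m then jap m ^ (-(α + β)) else 0) := by
  have hm := jap_pos m
  have hnm := jap_pos (n - m)
  have hn := jap_pos n
  by_cases hclose : jap m ≤ jap (n - m)
  swap
  · rw [if_neg hclose]; split_ifs <;> positivity
  rw [if_pos hclose]
  by_cases hsmall : jap m ≤ jap n
  · have hfar : jap n / 2 ≤ jap (n - m) := by
      have := jap_add_le_two_mul hclose
      rw [add_sub_cancel] at this
      linarith
    have hβ' : jap (n - m) ^ (-β) ≤ 2 ^ β * jap n ^ (-β) := by
      calc jap (n - m) ^ (-β) ≤ (jap n / 2) ^ (-β) :=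
            rpow_le_rpow_of_nonpos (by positivity) hfar (by linarith)
        _ = 2 ^ β * jap n ^ (-β) := by
            rw [div_rpow hn.le zero_le_two, rpow_neg zero_le_two, div_inv_eq_mul, mul_comm]
    rw [if_pos hsmall]
    have : 0 ≤ if jap n ≤ jap m then jap m ^ (-(α + β)) else 0 := by split_ifs <;> positivity
    nlinarith [rpow_nonneg hm.le (-α)]
  · rw [if_neg hsmall, if_pos (le_of_not_ge hsmall), mul_zero, zero_add, neg_add, rpow_add hm]
    exact mul_le_mul_of_nonneg_left (rpow_le_rpow_of_nonpos hm hclose (by linarith)) (by positivity)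

theorem exists_tsum_half_convolution_le {α β : ℝ} (hα0 : 0 ≤ α) (hα2 : α < 2) (hβ : 0 ≤ β)
    (hαβ : 2 < α + β) : ∃ C : ℝ≥0, ∀ n : ℤ × ℤ,
      ∑' m : ℤ × ℤ, ENNReal.ofReal
          (if jap m ≤ jap (n - m) then jap m ^ (-α) * jap (n - m) ^ (-β) else 0) ≤
        C * ENNReal.ofReal (jap n ^ (2 - α - β)) := by
  obtain ⟨Cb, hball⟩ := exists_tsum_ball_jap_rpow_neg_le hα0 hα2
  obtain ⟨Ct, htail⟩ := exists_tsum_tail_jap_rpow_neg_le hαβ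
  refine ⟨Real.toNNReal (2 ^ β) * Cb + Ct, fun n => ?_⟩
  have hn := jap_pos n
  set A := 2 ^ β * jap n ^ (-β)
  have hpt (m : ℤ × ℤ) : ENNReal.ofReal
      (if jap m ≤ jap (n - m) then jap m ^ (-α) * jap (n - m) ^ (-β) else 0) ≤
      ENNReal.ofReal A * ENNReal.ofReal (if jap m ≤ jap n then jap m ^ (-α) else 0) +
        ENNReal.ofReal (if jap n ≤ jap m then jap m ^ (-(α + β)) else 0) := by
    have := jap_pos m
    rw [← ENNReal.ofReal_mul (by positivity),
      ← ENNReal.ofReal_add (by split_ifs <;> positivity) (by split_ifs <;> positivity)]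
    exact ENNReal.ofReal_le_ofReal (half_convolution_summand_le hβ n m)
  have hA : ENNReal.ofReal A * ENNReal.ofReal (jap n ^ (2 - α)) =
      ENNReal.ofReal (2 ^ β) * ENNReal.ofReal (jap n ^ (2 - (α + β))) := by
    rw [← ENNReal.ofReal_mul (by positivity), ← ENNReal.ofReal_mul (by positivity), mul_assoc,
      ← rpow_add hn]
    ring_nf
  calc _ ≤ ∑' m : ℤ × ℤ, (ENNReal.ofReal A *
          ENNReal.ofReal (if jap m ≤ jap n then jap m ^ (-α) else 0) +
        ENNReal.ofReal (if jap n ≤ jap m then jap m ^ (-(α + β)) else 0)) :=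
        ENNReal.tsum_le_tsum hpt
    _ ≤ ENNReal.ofReal A * (Cb * ENNReal.ofReal (jap n ^ (2 - α))) +
          Ct * ENNReal.ofReal (jap n ^ (2 - (α + β))) := by
        rw [ENNReal.tsum_add, ENNReal.tsum_mul_left]
        gcongr
        exacts [hball _ hn.le, htail _ hn]
    _ = _ := by
        rw [mul_left_comm, hA, show 2 - (α + β) = 2 - α - β by ring, ENNReal.coe_add,
          ENNReal.coe_mul]
        change _ = (ENNReal.ofReal _ * _ + _) * _
        ring

theorem convolution_summand_le_half_add_half (α β : ℝ) (n m : ℤ × ℤ) :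
    ENNReal.ofReal (jap m ^ (-α) * jap (n - m) ^ (-β)) ≤
      ENNReal.ofReal (if jap m ≤ jap (n - m) then jap m ^ (-α) * jap (n - m) ^ (-β) else 0) +
        ENNReal.ofReal (if jap (n - m) ≤ jap (n - (n - m))
          then jap (n - m) ^ (-β) * jap (n - (n - m)) ^ (-α) else 0) := by
  rw [sub_sub_cancel]
  rcases le_total (jap m) (jap (n - m)) with h | h
  · rw [if_pos h]; exact le_self_add
  · rw [if_pos h, mul_comm]; exact le_add_self

theorem tsum_le_of_tsum_ofReal_le {ι : Type*} {f : ι → ℝ} {c : ℝ} (hf : ∀ i, 0 ≤ f i)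
    (hc : 0 ≤ c) (h : ∑' i, ENNReal.ofReal (f i) ≤ ENNReal.ofReal c) : ∑' i, f i ≤ c := by
  rw [← tsum_congr fun i => ENNReal.toReal_ofReal (hf i),
    ← ENNReal.tsum_toReal_eq fun _ => ENNReal.ofReal_ne_top]
  exact ENNReal.toReal_le_of_le_ofReal hc h

/-- Discrete convolution estimate on ℤ². -/
theorem discrete_convolution_estimate (α β : ℝ) (hab : α + β > 2) (ha : α < 2) (hb : β < 2) :
    ∃ C : ℝ, ∀ n : ℤ × ℤ,
      (∑' m : ℤ × ℤ, jap m ^ (-α) * jap (n - m) ^ (-β)) ≤ C * jap n ^ (2 - α - β) := by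
  obtain ⟨C₁, h₁⟩ := exists_tsum_half_convolution_le (by linarith) ha (by linarith) hab
  obtain ⟨C₂, h₂⟩ := exists_tsum_half_convolution_le (α := β) (β := α) (by linarith) hb
    (by linarith) (by linarith)
  rw [show 2 - β - α = 2 - α - β by ring] at h₂
  refine ⟨C₁ + C₂, fun n => tsum_le_of_tsum_ofReal_le
    (fun m => mul_nonneg (rpow_nonneg (jap_pos m).le _) (rpow_nonneg (jap_pos _).le _))
    (mul_nonneg (by positivity) (rpow_nonneg (jap_pos n).le _)) ?_⟩
  calc _ ≤ _ := ENNReal.tsum_le_tsum (convolution_summand_le_half_add_half α β n)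
    _ ≤ C₁ * ENNReal.ofReal (jap n ^ (2 - α - β)) + C₂ * ENNReal.ofReal (jap n ^ (2 - α - β)) := by
        rw [ENNReal.tsum_add]
        exact add_le_add (h₁ n) (((Equiv.subLeft n).tsum_eq _).trans_le (h₂ n))
    _ = _ := by
        rw [ENNReal.ofReal_mul (by positivity), ← NNReal.coe_add, ENNReal.ofReal_coe_nnreal,
          ENNReal.coe_add, add_mul]
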